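/- Let d ≥ 1 and Δx > 0. There exists a constant C > 0, depending only on d, such that for every continuously differentiable compactly supported function f : ℝ^d → ℝ, the piecewise-constant cell average f̄ satisfies ∫_{ℝ^d} |f̄(x) − f(x)| dx ≤ C · Δx · ∫_{ℝ^d} ‖∇f(x)‖ dx. -/

import Mathlib

/-!
On the cell of `x`, `f̄ - f x` is the average of `y ↦ f y - f x`, and every `y` in that cell lies in
`x + (-Δx, Δx)^d`, so `|f̄ - f|(x) ≤ Δx^{-d} ∫_{(-Δx, Δx)^d} |f (x + h) - f x| dh`. Integrating in
`x` and swapping the integrals reduces the claim to the translation estimate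
`∫ |f (x + h) - f x| dx ≤ ‖h‖ ∫ ‖∇f‖`, which is the fundamental theorem of calculus along
`t ↦ x + t • h` combined with translation invariance of Lebesgue measure. Since `‖h‖ ≤ √d Δx` on the
cube and the cube has volume `2^d Δx^d`, one can take `C = 2^d √d`.
-/

open MeasureTheory

/-- The spatial grid cell `R_α = αΔx + [-Δx/2, Δx/2)^d`. -/
def cell (d : ℕ) (dx : ℝ) (a : Fin d → ℤ) : Set (EuclideanSpace ℝ (Fin d)) :=
  {x | ∀ k : Fin d, (a k : ℝ) * dx - dx / 2 ≤ x k ∧ x k < (a k : ℝ) * dx + dx / 2}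

/-- The piecewise-constant cell average `f̄(x) = Δx^{-d} ∫_{R_α} f(y) dy` for `x ∈ R_α`,
where `α` is the index of the cell containing `x`. -/
noncomputable def cellAvg (d : ℕ) (dx : ℝ) (f : EuclideanSpace ℝ (Fin d) → ℝ)
    (x : EuclideanSpace ℝ (Fin d)) : ℝ :=
  (1 / dx ^ d) * ∫ y in cell d dx (fun k => ⌊x k / dx + 1 / 2⌋), f y

open Set
open scoped ENNReal

section Average

variable {α E : Type*} [MeasurableSpace α] {μ : Measure α}
  [NormedAddCommGroup E] [NormedSpace ℝ E]

theorem enorm_average_le_laverage (f : α → E) : ‖⨍ x, f x ∂μ‖ₑ ≤ ⨍⁻ x, ‖f x‖ₑ ∂μ := by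
  rw [average_eq', laverage_eq']
  exact enorm_integral_le_lintegral_enorm _

theorem enorm_setAverage_sub_le [CompleteSpace E] {s : Set α} {f : α → E} (hs₀ : μ s ≠ 0)
    (hs : μ s ≠ ∞) (hf : IntegrableOn f s μ) (c : E) :
    ‖(⨍ y in s, f y ∂μ) - c‖ₑ ≤ ⨍⁻ y in s, ‖f y - c‖ₑ ∂μ := by
  have : IsFiniteMeasure (μ.restrict s) := isFiniteMeasure_restrict.2 hs
  have hs_inv : (μ.restrict s univ)⁻¹ ≠ ∞ := ENNReal.inv_ne_top.2 (by simpa using hs₀)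
  have hsub : (⨍ y in s, f y ∂μ) - c = ⨍ y in s, (f y - c) ∂μ := by
    rw [average_eq' (f := fun y => f y - c),
      integral_sub (hf.smul_measure hs_inv) ((integrable_const c).smul_measure hs_inv),
      ← average_eq', ← average_eq', setAverage_const hs₀ hs]
  exact hsub ▸ enorm_average_le_laverage _

end Average

section TranslationEstimate

variable {E F : Type*} [NormedAddCommGroup E] [NormedSpace ℝ E] [NormedAddCommGroup F]
  [NormedSpace ℝ F] [CompleteSpace F] {f : E → F}

theorem enorm_sub_le_setLIntegral_fderiv (hf : ContDiff ℝ 1 f) (x h : E) :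
    ‖f (x + h) - f x‖ₑ ≤ ∫⁻ t in Ioc (0 : ℝ) 1, ‖fderiv ℝ f (x + t • h)‖ₑ * ‖h‖ₑ := by
  have hFTC : f (x + h) - f x = ∫ t in (0 : ℝ)..1, fderiv ℝ f (x + t • h) h := by
    simpa [sub_eq_iff_eq_add'] using
      map_add_eq_sum_add_integral_iteratedFDeriv (n := 0) (x := x) (y := h)
        fun t _ => hf.contDiffAt
  rw [hFTC, intervalIntegral.integral_of_le zero_le_one]
  exact (enorm_integral_le_lintegral_enorm _).trans
    (lintegral_mono fun t => (fderiv ℝ f (x + t • h)).le_opENorm h)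

variable [MeasurableSpace E] [BorelSpace E]
  {μ : Measure E} [μ.IsAddRightInvariant] [SFinite μ]

theorem lintegral_enorm_sub_translate_le (hf : ContDiff ℝ 1 f) (h : E) :
    ∫⁻ x, ‖f (x + h) - f x‖ₑ ∂μ ≤ ‖h‖ₑ * ∫⁻ x, ‖fderiv ℝ f x‖ₑ ∂μ := by
  have hDf : Continuous (fderiv ℝ f) := hf.continuous_fderiv one_ne_zero
  calc ∫⁻ x, ‖f (x + h) - f x‖ₑ ∂μ
      ≤ ∫⁻ x, (∫⁻ t in Ioc (0 : ℝ) 1, ‖fderiv ℝ f (x + t • h)‖ₑ * ‖h‖ₑ) ∂μ :=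
        lintegral_mono fun x => enorm_sub_le_setLIntegral_fderiv hf x h
    _ = ∫⁻ t in Ioc (0 : ℝ) 1, ∫⁻ x, ‖fderiv ℝ f (x + t • h)‖ₑ * ‖h‖ₑ ∂μ :=
        lintegral_lintegral_swap
          (Continuous.aemeasurable (by fun_prop (disch := exact enorm_ne_top)))
    _ = ∫⁻ t in Ioc (0 : ℝ) 1, (∫⁻ x, ‖fderiv ℝ f x‖ₑ ∂μ) * ‖h‖ₑ := by
        congr 1 with t
        rw [lintegral_mul_const' _ _ enorm_ne_top,
          lintegral_add_right_eq_self (fun x => ‖fderiv ℝ f x‖ₑ) (t • h)]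
    _ = ‖h‖ₑ * ∫⁻ x, ‖fderiv ℝ f x‖ₑ ∂μ := by
        rw [setLIntegral_const, Real.volume_Ioc, sub_zero, ENNReal.ofReal_one, mul_one, mul_comm]

theorem setLIntegral_lintegral_enorm_sub_translate_le (hf : ContDiff ℝ 1 f) (ν : Measure E)
    {s : Set E} {r : ℝ} (hs : ∀ h ∈ s, ‖h‖ ≤ r) :
    ∫⁻ h in s, ∫⁻ x, ‖f (x + h) - f x‖ₑ ∂μ ∂ν ≤
      ENNReal.ofReal r * ν s * ∫⁻ x, ‖fderiv ℝ f x‖ₑ ∂μ := by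
  calc ∫⁻ h in s, ∫⁻ x, ‖f (x + h) - f x‖ₑ ∂μ ∂ν
      ≤ ∫⁻ _ in s, ENNReal.ofReal r * ∫⁻ x, ‖fderiv ℝ f x‖ₑ ∂μ ∂ν := by
        refine setLIntegral_mono measurable_const fun h hh => ?_
        refine (lintegral_enorm_sub_translate_le hf h).trans ?_
        gcongr
        rw [← ofReal_norm]
        exact ENNReal.ofReal_le_ofReal (hs h hh)
    _ = ENNReal.ofReal r * ν s * ∫⁻ x, ‖fderiv ℝ f x‖ₑ ∂μ := by
        rw [setLIntegral_const]; ring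

end TranslationEstimate

theorem EuclideanSpace.volume_preimage_ofLp_pi {ι : Type*} [Fintype ι] (s : ι → Set ℝ) :
    volume (WithLp.ofLp ⁻¹' univ.pi s : Set (EuclideanSpace ℝ ι)) = ∏ i, volume (s i) := by
  rw [← volume_pi_pi, ← MeasurableEquiv.coe_toLp_symm,
    (EuclideanSpace.volume_preserving_symm_measurableEquiv_toLp ι).measure_preimage_equiv]

theorem EuclideanSpace.norm_le_sqrt_card_mul {ι : Type*} [Fintype ι] {x : EuclideanSpace ℝ ι}
    {r : ℝ} (hr : 0 ≤ r) (hx : ∀ i, |x i| ≤ r) : ‖x‖ ≤ √(Fintype.card ι) * r := by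
  calc ‖x‖ = √(∑ i, ‖x i‖ ^ 2) := EuclideanSpace.norm_eq x
    _ ≤ √(∑ _ : ι, r ^ 2) := by gcongr with i; exact hx i
    _ = √(Fintype.card ι) * r := by
        rw [Finset.sum_const, Finset.card_univ, nsmul_eq_mul, Real.sqrt_mul (by positivity),
          Real.sqrt_sq hr]

variable {d : ℕ} {dx : ℝ}

def cube (d : ℕ) (r : ℝ) : Set (EuclideanSpace ℝ (Fin d)) :=
  WithLp.ofLp ⁻¹' univ.pi fun _ => Ioo (-r) r

theorem volume_cube (r : ℝ) : volume (cube d r) = ENNReal.ofReal (2 * r) ^ d := by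
  rw [cube, EuclideanSpace.volume_preimage_ofLp_pi, Real.volume_Ioo, Finset.prod_const,
    Finset.card_univ, Fintype.card_fin, sub_neg_eq_add, two_mul]

theorem norm_le_of_mem_cube {r : ℝ} (hr : 0 ≤ r) {h : EuclideanSpace ℝ (Fin d)}
    (hh : h ∈ cube d r) : ‖h‖ ≤ √d * r := by
  have hk : ∀ k, |h k| ≤ r := fun k => (abs_lt.2 (hh k (mem_univ k))).le
  simpa using EuclideanSpace.norm_le_sqrt_card_mul hr hk

theorem mem_cell_floor (hdx : 0 < dx) (x : EuclideanSpace ℝ (Fin d)) :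
    x ∈ cell d dx (fun k => ⌊x k / dx + 1 / 2⌋) := by
  intro k
  have hlo := Int.floor_le (x k / dx + 1 / 2)
  have hhi := Int.lt_floor_add_one (x k / dx + 1 / 2)
  have hx : x k / dx * dx = x k := div_mul_cancel₀ (x k) hdx.ne'
  constructor <;> nlinarith

theorem volume_cell (a : Fin d → ℤ) : volume (cell d dx a) = ENNReal.ofReal dx ^ d := by
  have hcell : cell d dx a =
      WithLp.ofLp ⁻¹' univ.pi fun k => Ico ((a k : ℝ) * dx - dx / 2) ((a k : ℝ) * dx + dx / 2) := by
    ext x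
    simp [cell]
  rw [hcell, EuclideanSpace.volume_preimage_ofLp_pi]
  simp [Real.volume_Ico]

theorem sub_mem_cube_of_mem_cell {a : Fin d → ℤ} {x y : EuclideanSpace ℝ (Fin d)}
    (hx : x ∈ cell d dx a) (hy : y ∈ cell d dx a) : y - x ∈ cube d dx := by
  intro k _
  have := hx k
  have := hy k
  simp only [WithLp.ofLp_sub, Pi.sub_apply, mem_Ioo]
  constructor <;> linarith

theorem cellAvg_eq_setAverage (hdx : 0 ≤ dx) (f : EuclideanSpace ℝ (Fin d) → ℝ)
    (x : EuclideanSpace ℝ (Fin d)) :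
    cellAvg d dx f x = ⨍ y in cell d dx (fun k => ⌊x k / dx + 1 / 2⌋), f y := by
  rw [setAverage_eq, measureReal_def, volume_cell, ← ENNReal.ofReal_pow hdx,
    ENNReal.toReal_ofReal (by positivity), smul_eq_mul, cellAvg, one_div]

theorem measurable_cellAvg (d : ℕ) (dx : ℝ) (f : EuclideanSpace ℝ (Fin d) → ℝ) :
    Measurable (cellAvg d dx f) := by
  have hindex : Measurable fun x : EuclideanSpace ℝ (Fin d) =>
      (fun k => ⌊x k / dx + 1 / 2⌋ : Fin d → ℤ) :=
    measurable_pi_lambda _ fun k =>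
      (((measurable_pi_apply k).comp (WithLp.measurable_ofLp 2 (Fin d → ℝ))).div_const dx
        |>.add_const _).floor
  exact measurable_const.mul
    ((measurable_of_countable fun a : Fin d → ℤ => ∫ y in cell d dx a, f y).comp hindex)

theorem enorm_cellAvg_sub_le (hdx : 0 < dx) {f : EuclideanSpace ℝ (Fin d) → ℝ}
    (hf : Integrable f) (x : EuclideanSpace ℝ (Fin d)) :
    ‖cellAvg d dx f x - f x‖ₑ ≤
      (ENNReal.ofReal dx ^ d)⁻¹ * ∫⁻ h in cube d dx, ‖f (x + h) - f x‖ₑ := by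
  set R := cell d dx (fun k => ⌊x k / dx + 1 / 2⌋)
  have hR : volume R = ENNReal.ofReal dx ^ d := volume_cell _
  have hR₀ : volume R ≠ 0 := hR ▸ pow_ne_zero _ (ENNReal.ofReal_pos.2 hdx).ne'
  have hR_top : volume R ≠ ∞ := hR ▸ ENNReal.pow_ne_top ENNReal.ofReal_ne_top
  calc ‖cellAvg d dx f x - f x‖ₑ = ‖(⨍ y in R, f y) - f x‖ₑ := by
        rw [cellAvg_eq_setAverage hdx.le]
    _ ≤ ⨍⁻ y in R, ‖f y - f x‖ₑ ∂volume := enorm_setAverage_sub_le hR₀ hR_top hf.integrableOn _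
    _ = (ENNReal.ofReal dx ^ d)⁻¹ * ∫⁻ y in R, ‖f y - f x‖ₑ := by
        rw [setLAverage_eq, ENNReal.div_eq_inv_mul, hR]
    _ ≤ (ENNReal.ofReal dx ^ d)⁻¹ * ∫⁻ h in cube d dx, ‖f (x + h) - f x‖ₑ := by
        gcongr _ * ?_
        rw [← (measurePreserving_add_left volume x).setLIntegral_comp_preimage_emb
          (MeasurableEquiv.addLeft x).measurableEmbedding]
        refine lintegral_mono_set fun h hh => ?_
        simpa using sub_mem_cube_of_mem_cell (mem_cell_floor hdx x) hh

theorem lintegral_enorm_cellAvg_sub_le (hdx : 0 < dx) {f : EuclideanSpace ℝ (Fin d) → ℝ}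
    (hf : ContDiff ℝ 1 f) (hfi : Integrable f) :
    ∫⁻ x, ‖cellAvg d dx f x - f x‖ₑ ≤
      ENNReal.ofReal (2 ^ d * √d * dx) * ∫⁻ x, ‖fderiv ℝ f x‖ₑ := by
  set V := ENNReal.ofReal dx ^ d
  have hV₀ : V ≠ 0 := pow_ne_zero _ (ENNReal.ofReal_pos.2 hdx).ne'
  have hV_top : V ≠ ∞ := ENNReal.pow_ne_top ENNReal.ofReal_ne_top
  have hmeas : Measurable fun p : EuclideanSpace ℝ (Fin d) × EuclideanSpace ℝ (Fin d) =>
      ‖f (p.1 + p.2) - f p.1‖ₑ := by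
    have := hf.continuous
    fun_prop
  calc ∫⁻ x, ‖cellAvg d dx f x - f x‖ₑ
      ≤ ∫⁻ x, V⁻¹ * ∫⁻ h in cube d dx, ‖f (x + h) - f x‖ₑ :=
        lintegral_mono fun x => enorm_cellAvg_sub_le hdx hfi x
    _ = V⁻¹ * ∫⁻ h in cube d dx, ∫⁻ x, ‖f (x + h) - f x‖ₑ := by
        rw [lintegral_const_mul' _ _ (ENNReal.inv_ne_top.2 hV₀),
          lintegral_lintegral_swap hmeas.aemeasurable]
    _ ≤ V⁻¹ * (ENNReal.ofReal (√d * dx) * volume (cube d dx) * ∫⁻ x, ‖fderiv ℝ f x‖ₑ) := by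
        gcongr _ * ?_
        exact setLIntegral_lintegral_enorm_sub_translate_le hf _ fun h => norm_le_of_mem_cube hdx.le
    _ = ENNReal.ofReal (2 ^ d * √d * dx) * ∫⁻ x, ‖fderiv ℝ f x‖ₑ := by
        have hcube : volume (cube d dx) = 2 ^ d * V := by
          rw [volume_cube, ENNReal.ofReal_mul zero_le_two, mul_pow, ENNReal.ofReal_ofNat]
        have hC : ENNReal.ofReal (2 ^ d * √d * dx) = 2 ^ d * ENNReal.ofReal (√d * dx) := by
          rw [mul_assoc, ENNReal.ofReal_mul (by positivity), ENNReal.ofReal_pow zero_le_two,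
            ENNReal.ofReal_ofNat]
        calc V⁻¹ * (ENNReal.ofReal (√d * dx) * volume (cube d dx) * ∫⁻ x, ‖fderiv ℝ f x‖ₑ)
            = V⁻¹ * V * (2 ^ d * ENNReal.ofReal (√d * dx) * ∫⁻ x, ‖fderiv ℝ f x‖ₑ) := by
              rw [hcube]; ring
          _ = _ := by rw [ENNReal.inv_mul_cancel hV₀ hV_top, one_mul, hC]

theorem stmt13 (d : ℕ) (hd : 1 ≤ d) :
    ∃ C > 0, ∀ dx : ℝ, 0 < dx →
      ∀ f : EuclideanSpace ℝ (Fin d) → ℝ, ContDiff ℝ 1 f → HasCompactSupport f →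
        (∫ x, |cellAvg d dx f x - f x|) ≤ C * dx * ∫ x, ‖fderiv ℝ f x‖ := by
  have hd₀ : (0 : ℝ) < √d := Real.sqrt_pos.2 (by exact_mod_cast hd)
  refine ⟨2 ^ d * √d, by positivity, fun dx hdx f hf hfc => ?_⟩
  have hfi : Integrable f := hf.continuous.integrable_of_hasCompactSupport hfc
  have hDf : Integrable (fderiv ℝ f) :=
    (hf.continuous_fderiv one_ne_zero).integrable_of_hasCompactSupport (hfc.fderiv ℝ)
  simp_rw [← Real.norm_eq_abs]
  rw [integral_norm_eq_lintegral_enorm (f := fun x => cellAvg d dx f x - f x)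
      ((measurable_cellAvg d dx f).sub hf.continuous.measurable).aestronglyMeasurable,
    integral_norm_eq_lintegral_enorm hDf.aestronglyMeasurable]
  calc _ ≤ (ENNReal.ofReal (2 ^ d * √d * dx) * ∫⁻ x, ‖fderiv ℝ f x‖ₑ).toReal :=
        ENNReal.toReal_mono (ENNReal.mul_ne_top ENNReal.ofReal_ne_top hDf.2.ne)
          (lintegral_enorm_cellAvg_sub_le hdx hf hfi)
    _ = _ := by rw [ENNReal.toReal_mul, ENNReal.toReal_ofReal (by positivity)]
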